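/- For every finite connected simple graph G, the maximum number of completely independent spanning trees in G is at most ⌊|V(G)|/γ_c(G)⌋; that is, τ*(G) ≤ ⌊|V(G)|/γ_c(G)⌋. -/

import Mathlib

namespace CISTPaper

open SimpleGraph

variable {V : Type*} {W : Type*}

/-- `T` is a spanning tree of `G` (both graphs on the same vertex type). -/
def IsSpanningTree (G T : SimpleGraph V) : Prop :=
  T ≤ G ∧ T.IsTree

/-- The set of internal vertices of a graph: vertices of degree at least 2. -/
def internalVerts (T : SimpleGraph V) : Set V :=
  {v | 2 ≤ (T.neighborSet v).ncard}

/-- `G` has `k` completely independent spanning trees: pairwise edge-disjoint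
spanning trees whose sets of internal vertices are pairwise disjoint. -/
def HasCIST (G : SimpleGraph V) (k : ℕ) : Prop :=
  ∃ T : Fin k → SimpleGraph V,
    (∀ i, IsSpanningTree G (T i)) ∧
    ∀ i j, i ≠ j →
      Disjoint (T i).edgeSet (T j).edgeSet ∧
      Disjoint (internalVerts (T i)) (internalVerts (T j))

/-- `τ*(G)`: the maximum number of completely independent spanning trees of `G`. -/
noncomputable def tauStar (G : SimpleGraph V) : ℕ :=
  sSup {k | HasCIST G k}

/-- `G` has `k` pairwise edge-disjoint spanning trees. -/
def HasEDST (G : SimpleGraph V) (k : ℕ) : Prop :=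
  ∃ T : Fin k → SimpleGraph V,
    (∀ i, IsSpanningTree G (T i)) ∧
    ∀ i j, i ≠ j → Disjoint (T i).edgeSet (T j).edgeSet

/-- `τ(G)`: the maximum number of pairwise edge-disjoint spanning trees of `G`. -/
noncomputable def tau (G : SimpleGraph V) : ℕ :=
  sSup {k | HasEDST G k}

/-- The minimum degree `δ(G)`. -/
noncomputable def minDeg (G : SimpleGraph V) : ℕ :=
  sInf (Set.range fun v => (G.neighborSet v).ncard)

/-- `H` is `k`-connected: `H` has more than `k` vertices and deleting any set of
fewer than `k` vertices leaves `H` connected. -/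
def IsKConnected (H : SimpleGraph W) (k : ℕ) : Prop :=
  k < Nat.card W ∧ ∀ S : Set W, S.ncard < k → (H.induce Sᶜ).Connected

/-- The vertex connectivity `κ(H)`: the largest `k` such that `H` is `k`-connected. -/
noncomputable def kappa (H : SimpleGraph W) : ℕ :=
  sSup {k | IsKConnected H k}

/-- An edge-cut of `G`: a set of edges of `G` whose deletion disconnects `G`. -/
def IsEdgeCut (G : SimpleGraph V) (F : Set (Sym2 V)) : Prop :=
  F ⊆ G.edgeSet ∧ ¬ (G.deleteEdges F).Connected

/-- `G` is super edge-connected: every minimum-size edge-cut consists of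
all edges incident to a single vertex. -/
def SuperEdgeConnected (G : SimpleGraph V) : Prop :=
  ∀ F : Set (Sym2 V), IsEdgeCut G F →
    (∀ F' : Set (Sym2 V), IsEdgeCut G F' → F.ncard ≤ F'.ncard) →
    ∃ v : V, F = G.incidenceSet v

/-- `f_S(v) = deg_G(v) - deg_{⟨S⟩_G}(v)`. -/
noncomputable def fS (G : SimpleGraph V) (S : Set V) (v : V) : ℕ :=
  (G.neighborSet v).ncard - (G.neighborSet v ∩ S).ncard

/-- `ζ(S)`: the minimum of `f_S(u) + f_S(v)` over edges `uv` of `⟨S⟩_G`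
(`⊤` if there is no such edge). -/
noncomputable def zeta (G : SimpleGraph V) (S : Set V) : ℕ∞ :=
  sInf {x : ℕ∞ | ∃ u ∈ S, ∃ v ∈ S, G.Adj u v ∧ x = ((fS G S u + fS G S v : ℕ) : ℕ∞)}

/-- A star: a tree with at most one vertex of degree at least 2. -/
def IsStar (H : SimpleGraph W) : Prop :=
  H.IsTree ∧ (internalVerts H).Subsingleton

/-- `S` is a star-subset of `V(G)`: every connected component of the induced
subgraph `⟨S⟩_G` is a star (vacuously true for `S = ∅`). -/
def IsStarSubset (G : SimpleGraph V) (S : Set V) : Prop :=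
  ∀ C : (G.induce S).ConnectedComponent, IsStar ((G.induce S).induce C.supp)

/-- `τ'(G)`: the maximum over proper star-subsets `S ⊊ V(G)` of
`min (τ(G - S)) (ζ(S))`. -/
noncomputable def tauPrime (G : SimpleGraph V) : ℕ :=
  sSup {m | ∃ S : Set V, S ≠ Set.univ ∧ IsStarSubset G S ∧
    m = (min ((tau (G.induce Sᶜ) : ℕ∞)) (zeta G S)).toNat}

/-- A connected dominating set of `G`. -/
def IsConnDomSet (G : SimpleGraph V) (S : Set V) : Prop :=
  S.Nonempty ∧ (G.induce S).Connected ∧ ∀ v ∉ S, ∃ u ∈ S, G.Adj v u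

/-- `γ_c(G)`: the minimum cardinality of a connected dominating set of `G`. -/
noncomputable def gammaC (G : SimpleGraph V) : ℕ :=
  sInf {n | ∃ S : Set V, IsConnDomSet G S ∧ S.ncard = n}

/-- The bipartite subgraph `⟨A, B⟩_G` of `G` induced by the partite sets `A` and `B`:
its vertex set is `A ∪ B` and its edges are the edges of `G` with one endpoint in `A`
and the other in `B`. -/
def bipartiteBetween (G : SimpleGraph V) (A B : Set V) : SimpleGraph ↥(A ∪ B) where
  Adj u v := G.Adj ↑u ↑v ∧ (((u : V) ∈ A ∧ (v : V) ∈ B) ∨ ((u : V) ∈ B ∧ (v : V) ∈ A))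
  symm := by
    constructor
    rintro u v ⟨h, hc | hc⟩
    · exact ⟨h.symm, Or.inr ⟨hc.2, hc.1⟩⟩
    · exact ⟨h.symm, Or.inl ⟨hc.2, hc.1⟩⟩
  loopless := by
    constructor
    rintro u ⟨h, -⟩
    exact G.irrefl h

/-- Every connected component of `H` contains a cycle. -/
def EveryComponentHasCycle (H : SimpleGraph W) : Prop :=
  ∀ C : H.ConnectedComponent, ∃ v : W, H.connectedComponentMk v = C ∧
    ∃ p : H.Walk v v, p.IsCycle

/-- `H` is a path graph: a tree in which every vertex has degree at most 2. -/
def IsPathGraph (H : SimpleGraph W) : Prop :=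
  H.IsTree ∧ ∀ v : W, (H.neighborSet v).ncard ≤ 2

end CISTPaper

/-!
The internal vertices of a spanning tree on at least three vertices form a connected dominating
set: a path of the tree between two internal vertices passes only through internal vertices, and
a leaf is adjacent to an internal vertex. The internal vertex sets of completely independent
spanning trees are pairwise disjoint, so `k` such trees give `k * γ_c(G) ≤ |V(G)|`. On two
vertices there is at most one spanning tree, since every tree contains the only possible edge.
-/

namespace CISTPaper

open SimpleGraph Walk

section

variable {V : Type*}

section InternalVerts

variable {T : SimpleGraph V}

lemma mem_internalVerts_of_adj [Finite V] {x a b : V} (ha : T.Adj x a) (hb : T.Adj x b)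
    (hab : a ≠ b) : x ∈ internalVerts T :=
  (Set.one_lt_ncard (Set.toFinite _)).mpr ⟨a, ha, b, hb, hab⟩

lemma IsPath.mem_internalVerts [Finite V] {a b x : V} {p : T.Walk a b} (hp : p.IsPath)
    (hx : x ∈ p.support) (hxa : x ≠ a) (hxb : x ≠ b) : x ∈ internalVerts T := by
  obtain ⟨i, rfl, hi⟩ := mem_support_iff_exists_getVert.mp hx
  have hi0 : i ≠ 0 := by rintro rfl; exact hxa p.getVert_zero
  have hil : i ≠ p.length := by rintro rfl; exact hxb p.getVert_length
  have hprev : T.Adj (p.getVert i) (p.getVert (i - 1)) := by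
    simpa [Nat.sub_add_cancel (Nat.pos_of_ne_zero hi0)] using
      (p.adj_getVert_succ (i := i - 1) (by omega)).symm
  have hnext : T.Adj (p.getVert i) (p.getVert (i + 1)) := p.adj_getVert_succ (by omega)
  refine mem_internalVerts_of_adj hprev hnext fun h => ?_
  have := hp.getVert_injOn (Set.mem_ofPred.mpr (by omega)) (Set.mem_ofPred.mpr (by omega)) h
  omega

lemma IsTree.exists_adj_mem_internalVerts [Fintype V] (hT : T.IsTree)
    (h3 : 3 ≤ Fintype.card V) {v : V} (hv : v ∉ internalVerts T) :
    ∃ u, T.Adj v u ∧ u ∈ internalVerts T := by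
  classical
  have : Nontrivial V := Fintype.one_lt_card_iff_nontrivial.mp (by omega)
  obtain ⟨u, hvu⟩ := hT.connected.preconnected.exists_adj_of_nontrivial v
  obtain ⟨z, -, hz⟩ := Finset.exists_mem_notMem_of_card_lt_card
    (s := {u, v}) (t := Finset.univ) (Finset.card_le_two.trans_lt (by rw [Finset.card_univ]; omega))
  simp only [Finset.mem_insert, Finset.mem_singleton, not_or] at hz
  obtain ⟨p⟩ := hT.connected.preconnected z u
  have hnil : ¬ p.toPath.val.Nil := Walk.not_nil_of_ne hz.1
  refine ⟨u, hvu, mem_internalVerts_of_adj hvu.symm (adj_penultimate hnil).symm fun hpv => ?_⟩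
  -- otherwise `v` would lie strictly inside the tree path from `z` to `u`
  exact hv (IsPath.mem_internalVerts p.toPath.property (hpv ▸ getVert_mem_support _ _)
    (Ne.symm hz.2) hvu.ne)

lemma IsTree.isConnDomSet_internalVerts [Fintype V] {G : SimpleGraph V} (hT : T.IsTree)
    (hTG : T ≤ G) (h3 : 3 ≤ Fintype.card V) : IsConnDomSet G (internalVerts T) := by
  classical
  have hdom : ∀ v ∉ internalVerts T, ∃ u ∈ internalVerts T, G.Adj v u := fun v hv =>
    let ⟨u, hvu, hu⟩ := IsTree.exists_adj_mem_internalVerts hT h3 hv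
    ⟨u, hu, hTG hvu⟩
  have hne : (internalVerts T).Nonempty := by
    have : Nonempty V := Fintype.card_pos_iff.mp (by omega)
    obtain ⟨v⟩ := ‹Nonempty V›
    by_cases hv : v ∈ internalVerts T
    · exact ⟨v, hv⟩
    · obtain ⟨u, hu, -⟩ := hdom v hv
      exact ⟨u, hu⟩
  refine ⟨hne, (connected_iff _).mpr ⟨fun ⟨a, ha⟩ ⟨b, hb⟩ => ?_, hne.to_subtype⟩,
    hdom⟩
  obtain ⟨p⟩ := hT.connected.preconnected a b
  have hsupp : ∀ x ∈ (p.toPath.val.mapLe hTG).support, x ∈ internalVerts T := by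
    intro x hx
    rw [support_mapLe_eq_support] at hx
    by_cases hxa : x = a
    · exact hxa ▸ ha
    by_cases hxb : x = b
    · exact hxb ▸ hb
    exact IsPath.mem_internalVerts p.toPath.property hx hxa hxb
  exact ⟨(p.toPath.val.mapLe hTG).induce _ hsupp⟩

end InternalVerts

lemma isConnDomSet_univ {G : SimpleGraph V} (hG : G.Connected) : IsConnDomSet G Set.univ :=
  have : Nonempty V := hG.nonempty
  ⟨Set.univ_nonempty, (induceUnivIso G).connected_iff.mpr hG, fun _ hv => absurd trivial hv⟩

lemma gammaC_le_ncard {G : SimpleGraph V} {S : Set V} (hS : IsConnDomSet G S) :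
    gammaC G ≤ S.ncard :=
  Nat.sInf_le ⟨S, hS, rfl⟩

lemma gammaC_le_card [Fintype V] {G : SimpleGraph V} (hG : G.Connected) :
    gammaC G ≤ Fintype.card V := by
  simpa using gammaC_le_ncard (isConnDomSet_univ hG)

lemma gammaC_pos [Finite V] {G : SimpleGraph V} (hG : G.Connected) : 0 < gammaC G := by
  obtain ⟨S, hS, hcard⟩ := Nat.sInf_mem (⟨_, Set.univ, isConnDomSet_univ hG, rfl⟩ :
    {n | ∃ S : Set V, IsConnDomSet G S ∧ S.ncard = n}.Nonempty)
  rw [gammaC, ← hcard]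
  exact (Set.ncard_pos (Set.toFinite S)).mpr hS.1


section HasCIST

variable {G : SimpleGraph V}

lemma hasCIST_zero (G : SimpleGraph V) : HasCIST G 0 :=
  ⟨Fin.elim0, fun i => i.elim0, fun i => i.elim0⟩

lemma HasCIST.mul_gammaC_le_card [Fintype V] {k : ℕ} (h : HasCIST G k)
    (h3 : 3 ≤ Fintype.card V) : k * gammaC G ≤ Fintype.card V := by
  obtain ⟨T, hT, hdisj⟩ := h
  calc k * gammaC G = ∑ _i : Fin k, gammaC G := by simp
    _ ≤ ∑ i, (internalVerts (T i)).ncard := Finset.sum_le_sum fun i _ =>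
        gammaC_le_ncard (IsTree.isConnDomSet_internalVerts (hT i).2 (hT i).1 h3)
    _ = (⋃ i, internalVerts (T i)).ncard := by
        rw [Set.ncard_iUnion_of_finite (fun i => Set.toFinite (internalVerts (T i)))
          (fun i j hij => (hdisj i j hij).2), finsum_eq_sum_of_fintype]
    _ ≤ Fintype.card V := by simpa using Set.ncard_le_card (⋃ i, internalVerts (T i))

lemma HasCIST.le_one_of_card_eq_two [Fintype V] {k : ℕ} (h : HasCIST G k)
    (h2 : Fintype.card V = 2) : k ≤ 1 := by
  obtain ⟨T, hT, hdisj⟩ := h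
  obtain ⟨u, v, huv, huniv⟩ := Nat.card_eq_two_iff.mp (Nat.card_eq_fintype_card.trans h2)
  have : Nontrivial V := ⟨⟨u, v, huv⟩⟩
  have hadj : ∀ i, (T i).Adj u v := fun i => by
    obtain ⟨w, huw⟩ := (hT i).2.connected.preconnected.exists_adj_of_nontrivial u
    have hw : w ∈ ({u, v} : Set V) := huniv ▸ Set.mem_univ w
    rcases hw with rfl | rfl
    · exact absurd huw (T i).irrefl
    · exact huw
  by_contra! hk
  exact Set.disjoint_left.mp (hdisj ⟨0, by omega⟩ ⟨1, hk⟩ (by simp)).1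
    ((T _).mem_edgeSet.mpr (hadj _)) ((T _).mem_edgeSet.mpr (hadj _))

-- On one vertex `HasCIST G k` holds for every `k` (take `k` copies of `⊥`); the set of such `k`
-- is unbounded, so its `sSup` is the junk value `0`.
lemma tauStar_eq_zero_of_subsingleton [Nonempty V] [Subsingleton V] (G : SimpleGraph V) :
    tauStar G = 0 := by
  have hint : internalVerts (⊥ : SimpleGraph V) = ∅ := by simp [internalVerts]
  have hall : ∀ k, HasCIST G k := fun k =>
    ⟨fun _ => ⊥, fun _ => ⟨bot_le, .of_subsingleton⟩, fun _ _ _ => by simp [hint]⟩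
  have hunb : ¬ BddAbove {k | HasCIST G k} := fun ⟨m, hm⟩ => by
    have := hm (hall (m + 1))
    omega
  rw [tauStar, csSup_of_not_bddAbove hunb, csSup_empty]
  rfl

end HasCIST

end

/-- For every finite connected simple graph `G`,
`τ*(G) ≤ ⌊|V(G)| / γ_c(G)⌋`. -/
theorem stmt_11 {V : Type*} [Fintype V] (G : SimpleGraph V) (hG : G.Connected) :
    tauStar G ≤ Fintype.card V / gammaC G := by
  have : Nonempty V := hG.nonempty
  rcases subsingleton_or_nontrivial V with hV | hV
  · rw [tauStar_eq_zero_of_subsingleton]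
    exact Nat.zero_le _
  refine csSup_le ⟨0, hasCIST_zero G⟩ fun k hk => ?_
  rw [Nat.le_div_iff_mul_le (gammaC_pos hG)]
  by_cases h3 : 3 ≤ Fintype.card V
  · exact hk.mul_gammaC_le_card h3
  · have h2 : Fintype.card V = 2 := by
      have := Fintype.one_lt_card (α := V)
      omega
    calc k * gammaC G ≤ 1 * Fintype.card V :=
          Nat.mul_le_mul (hk.le_one_of_card_eq_two h2) (gammaC_le_card hG)
      _ = Fintype.card V := one_mul _

end CISTPaper
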